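/- Let G = (S, V, E, π, σ, α) be a restaking graph, D ⊆ V, and suppose (A, B) is an attacking coalition on the graph G ↘ D obtained by deleting the validators D. Then (A, B ∪ D) is an attacking coalition on G. -/

import Mathlib

/-- A restaking graph `G = (S, V, E, π, σ, α)`. -/
structure RestakingGraph where
  /-- services -/
  S : Type
  /-- validators -/
  V : Type
  finS : Fintype S
  finV : Fintype V
  /-- edge relation: `E s v` means validator `v` restakes for service `s` -/
  E : S → V → Prop
  /-- profit from corruption -/
  pi : S → ℝ
  /-- stake -/
  stake : V → ℝ
  /-- attack thresholds -/
  alpha : S → ℝ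
  pi_nonneg : ∀ s, 0 ≤ pi s
  stake_nonneg : ∀ v, 0 ≤ stake v
  alpha_pos : ∀ s, 0 < alpha s
  alpha_le_one : ∀ s, alpha s ≤ 1

attribute [instance] RestakingGraph.finS RestakingGraph.finV

namespace RestakingGraph

variable (G : RestakingGraph)

/-- `π_A = Σ_{s ∈ A} π_s` -/
noncomputable def piSum (A : Set G.S) : ℝ := ∑ᶠ s ∈ A, G.pi s

/-- `σ_B = Σ_{v ∈ B} σ_v` -/
noncomputable def stakeSum (B : Set G.V) : ℝ := ∑ᶠ v ∈ B, G.stake v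

/-- `N(s)`: validators adjacent to service `s` -/
def Ns (s : G.S) : Set G.V := {v | G.E s v}

/-- `N(v)`: services adjacent to validator `v` -/
def Nv (v : G.V) : Set G.S := {s | G.E s v}

/-- `N(A)`: validators adjacent to some service of `A` -/
def NA (A : Set G.S) : Set G.V := ⋃ s ∈ A, G.Ns s

/-- `N(C)`: validators adjacent to some service of `C` -/
def NC (C : Set G.S) : Set G.V := ⋃ s ∈ C, G.Ns s

/-- `Γ(C)`: validators exclusive to `C` -/
def Gamma (C : Set G.S) : Set G.V := {v | G.Nv v ⊆ C}

/-- total stake `σ_V` -/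
noncomputable def totalStake : ℝ := G.stakeSum Set.univ

/-- `(A, B)` is an attacking coalition on `G ↘ D` (for `D = ∅`, on `G` itself):
the remaining validators `B` control an `α_s` fraction of the remaining stake of
each `s ∈ A`. -/
def IsCoalition (D : Set G.V) (A : Set G.S) (B : Set G.V) : Prop :=
  Disjoint B D ∧ ∀ s ∈ A, G.alpha s * G.stakeSum (G.Ns s \ D) ≤ G.stakeSum (B ∩ G.Ns s)

/-- `(A, B)` is a valid attack on `G ↘ D`. -/
def IsValidAttack (D : Set G.V) (A : Set G.S) (B : Set G.V) : Prop :=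
  G.IsCoalition D A B ∧ G.stakeSum B < G.piSum A

/-- `(A, B)` is a stable attack on `G ↘ D`. -/
def IsStableAttack (D : Set G.V) (A : Set G.S) (B : Set G.V) : Prop :=
  G.IsValidAttack D A B ∧
    ∀ A' B', A' ⊆ A → B' ⊆ B → G.IsValidAttack D A' B' →
      G.stakeSum (B \ B') < G.piSum (A \ A')

/-- `B_1 ∪ ⋯ ∪ B_{t-1}`: the validators removed before step `t`. -/
def prevUnion {T : ℕ} (B : Fin T → Set G.V) (t : Fin T) : Set G.V :=
  ⋃ i : Fin T, ⋃ _ : i < t, B i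

/-- `(A_1, B_1), …, (A_T, B_T)` is a valid cascade of attacks on `G ↘ D`. -/
def IsCascade (D : Set G.V) {T : ℕ} (A : Fin T → Set G.S) (B : Fin T → Set G.V) : Prop :=
  (∀ i j, i ≠ j → Disjoint (A i) (A j)) ∧
  (∀ i j, i ≠ j → Disjoint (B i) (B j)) ∧
  ∀ t, G.IsValidAttack (D ∪ G.prevUnion B t) (A t) (B t)

/-- `(A_1, B_1), …, (A_T, B_T)` is a cascade of stable attacks on `G ↘ D`. -/
def IsStableCascade (D : Set G.V) {T : ℕ} (A : Fin T → Set G.S) (B : Fin T → Set G.V) : Prop :=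
  (∀ i j, i ≠ j → Disjoint (A i) (A j)) ∧
  (∀ i j, i ≠ j → Disjoint (B i) (B j)) ∧
  ∀ t, G.IsStableAttack (D ∪ G.prevUnion B t) (A t) (B t)

/-- `R_ψ(G)`: worst-case stake loss from a shock of relative size at most `ψ`
followed by an arbitrary valid cascade of attacks. -/
noncomputable def R (ψ : ℝ) : ℝ :=
  ψ + sSup { r : ℝ |
    ∃ (D : Set G.V) (T : ℕ) (A : Fin T → Set G.S) (B : Fin T → Set G.V),
      G.stakeSum D / G.totalStake ≤ ψ ∧ G.IsCascade D A B ∧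
      r = G.stakeSum (⋃ t, B t) / G.totalStake }

/-- `R_ψ(C, G)`: local worst-case stake loss (under stable attacks) for the
coalition of services `C`. -/
noncomputable def Rloc (C : Set G.S) (ψ : ℝ) : ℝ :=
  ψ + sSup { r : ℝ |
    ∃ (D : Set G.V) (T : ℕ) (A : Fin T → Set G.S) (B : Fin T → Set G.V),
      G.stakeSum (D ∩ G.Gamma C) / G.stakeSum (G.Gamma C) ≤ ψ ∧ G.IsStableCascade D A B ∧
      r = G.stakeSum ((⋃ t, B t) ∩ G.Gamma C) / G.stakeSum (G.Gamma C) }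

/-- `G` is secure: no valid attack exists. -/
def Secure : Prop := ∀ A B, ¬ G.IsValidAttack ∅ A B

/-- `G` is secure with `γ`-slack. -/
def SecureWithSlack (γ : ℝ) : Prop :=
  ∀ A B, G.IsCoalition ∅ A B → (1 + γ) * G.piSum A ≤ G.stakeSum B

/-- `(X, Y)` is an attack header on `G`. -/
def IsAttackHeader (X : Set G.S) (Y : Set G.V) : Prop :=
  Y ⊆ G.Gamma X ∧ ∃ B : Set G.V, B ∩ G.Gamma X = ∅ ∧ G.IsCoalition ∅ X (B ∪ Y)

/-- The EigenLayer sufficient condition. -/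
def EigenLayerCond : Prop :=
  ∀ v : G.V,
    (∑ᶠ s ∈ G.Nv v, G.stake v / G.stakeSum (G.Ns s) * (G.pi s / G.alpha s)) ≤ G.stake v

/-- The `γ`-scaled EigenLayer condition. -/
def EigenLayerSlackCond (γ : ℝ) : Prop :=
  ∀ v : G.V,
    (∑ᶠ s ∈ G.Nv v, G.stake v / G.stakeSum (G.Ns s) * ((1 + γ) * G.pi s / G.alpha s))
      ≤ G.stake v

end RestakingGraph

/-! Split `σ_{N(s)}` into the stake outside `D`, of which `B` holds an `α_s` fraction by
hypothesis, and the stake inside `D`, of which `D` holds all and hence at least an `α_s`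
fraction since `α_s ≤ 1`; `B` and `D` are disjoint, so these two shares add up. -/

namespace RestakingGraph

variable (G : RestakingGraph)

theorem stakeSum_nonneg (B : Set G.V) : 0 ≤ G.stakeSum B :=
  finsum_nonneg fun v => finsum_nonneg fun _ => G.stake_nonneg v

theorem stakeSum_union {B C : Set G.V} (h : Disjoint B C) :
    G.stakeSum (B ∪ C) = G.stakeSum B + G.stakeSum C :=
  finsum_mem_union h B.toFinite C.toFinite

theorem stakeSum_diff_add_inter (X D : Set G.V) :
    G.stakeSum (X \ D) + G.stakeSum (X ∩ D) = G.stakeSum X := by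
  rw [← G.stakeSum_union Set.disjoint_sdiff_inter, Set.sdiff_union_inter]

theorem alpha_mul_stakeSum_le (s : G.S) (B : Set G.V) :
    G.alpha s * G.stakeSum B ≤ G.stakeSum B :=
  mul_le_of_le_one_left (G.stakeSum_nonneg B) (G.alpha_le_one s)

end RestakingGraph

/-- Lemma: adding the deleted validators to a coalition.
If `(A, B)` is an attacking coalition on `G ↘ D`, then `(A, B ∪ D)` is an
attacking coalition on `G`. -/
theorem coalition_union_deleted
    (G : RestakingGraph) (D : Set G.V) (A : Set G.S) (B : Set G.V)
    (h : G.IsCoalition D A B) :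
    G.IsCoalition ∅ A (B ∪ D) := by
  obtain ⟨hBD, hA⟩ := h
  refine ⟨Set.disjoint_empty _, fun s hs => ?_⟩
  calc G.alpha s * G.stakeSum (G.Ns s \ ∅)
      = G.alpha s * G.stakeSum (G.Ns s \ D) + G.alpha s * G.stakeSum (D ∩ G.Ns s) := by
        rw [Set.sdiff_empty, ← mul_add, Set.inter_comm, G.stakeSum_diff_add_inter]
    _ ≤ G.stakeSum (B ∩ G.Ns s) + G.stakeSum (D ∩ G.Ns s) :=
        add_le_add (hA s hs) (G.alpha_mul_stakeSum_le s _)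
    _ = G.stakeSum ((B ∪ D) ∩ G.Ns s) := by
        rw [Set.union_inter_distrib_right,
          G.stakeSum_union (hBD.mono Set.inter_subset_left Set.inter_subset_left)]
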